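/- arXiv:math/0405495 — 3 statements merged into one kernel-verified Lean document; each statement's English description precedes it below -/
import Mathlib

section
/- Let H be an inner product space over the real or complex numbers, let a ∈ H be a unit vector, let M ≥ m > 0, and let x ∈ H be a nonzero vector with Re⟨M a − x, x − m a⟩ ≥ 0. Then Re⟨x, a⟩ / ‖x‖ ≥ 2√(mM)/(m + M). -/
open RCLike

/-
Expanding the hypothesis gives `‖x‖² + mM ≤ (m + M) Re⟨x, a⟩`, and by AM-GM the left side is at
least `2 √(mM) ‖x‖`.
-/

theorem re_inner_smul_sub_sub_smul {𝕜 H : Type*} [RCLike 𝕜] [NormedAddCommGroup H]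
    [InnerProductSpace 𝕜 H] (a x : H) (m M : ℝ) :
    re (inner 𝕜 ((M : 𝕜) • a - x) (x - (m : 𝕜) • a) : 𝕜) =
      (m + M) * re (inner 𝕜 x a : 𝕜) - ‖x‖ ^ 2 - m * M * ‖a‖ ^ 2 := by
  simp only [inner_sub_left, inner_sub_right, inner_smul_left, inner_smul_right, map_sub,
    conj_ofReal, re_ofReal_mul, inner_re_symm a x, inner_self_eq_norm_sq]
  ring

theorem two_mul_sqrt_mul_le_sq_add {p : ℝ} (hp : 0 ≤ p) (t : ℝ) :
    2 * Real.sqrt p * t ≤ t ^ 2 + p := by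
  simpa [Real.sq_sqrt hp, add_comm] using two_mul_le_add_sq (Real.sqrt p) t

theorem re_inner_div_norm_ge {𝕜 H : Type*} [RCLike 𝕜] [NormedAddCommGroup H]
    [InnerProductSpace 𝕜 H] (a : H) (ha : ‖a‖ = 1) (m M : ℝ) (hm : 0 < m)
    (hmM : m ≤ M) (x : H) (hx : x ≠ 0)
    (h : 0 ≤ re (inner 𝕜 ((M : 𝕜) • a - x) (x - (m : 𝕜) • a) : 𝕜)) :
    2 * Real.sqrt (m * M) / (m + M) ≤ re (inner 𝕜 x a : 𝕜) / ‖x‖ := by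
  rw [re_inner_smul_sub_sub_smul, ha] at h
  have key : 2 * Real.sqrt (m * M) * ‖x‖ ≤ (m + M) * re (inner 𝕜 x a : 𝕜) :=
    calc 2 * Real.sqrt (m * M) * ‖x‖
        ≤ ‖x‖ ^ 2 + m * M := two_mul_sqrt_mul_le_sq_add (by nlinarith) _
      _ ≤ (m + M) * re (inner 𝕜 x a : 𝕜) := by linarith
  rw [div_le_div_iff₀ (by linarith) (norm_pos_iff.mpr hx)]
  linarith
end

section
/- Let H be an inner product space over the real or complex numbers, let e ∈ H with ‖e‖ = 1, and let M ≥ m > 0. If x₁, …, xₙ ∈ H satisfy Re⟨M e − xᵢ, xᵢ − m e⟩ ≥ 0 for each i ∈ {1, …, n}, then 0 ≤ Σᵢ₌₁ⁿ ‖xᵢ‖ − ‖Σᵢ₌₁ⁿ xᵢ‖ ≤ ((√M − √m)² / (2√(mM))) · Re⟨Σᵢ₌₁ⁿ xᵢ, e⟩, and the latter quantity is at most ((√M − √m)² / (2√(mM))) · ‖Σᵢ₌₁ⁿ xᵢ‖. -/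
/-!
Expanding the hypothesis gives `‖xᵢ‖² + mM ≤ (M + m) Re⟨xᵢ, e⟩`, and AM-GM turns the left side
into `2√(mM) ‖xᵢ‖`. Summing over `i` yields `Σ ‖xᵢ‖ ≤ (M + m)/(2√(mM)) · Re⟨Σ xᵢ, e⟩`; since
`(M + m)/(2√(mM)) = 1 + (√M - √m)²/(2√(mM))` and `Re⟨Σ xᵢ, e⟩ ≤ ‖Σ xᵢ‖` by Cauchy–Schwarz,
subtracting `‖Σ xᵢ‖` gives the reverse triangle inequality.
-/

open RCLike Finset

section InnerProduct

variable {𝕜 H : Type*} [RCLike 𝕜] [NormedAddCommGroup H] [InnerProductSpace 𝕜 H]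

theorem re_inner_smul_sub_sub_smul_s13 (e y : H) (a b : ℝ) :
    re (inner 𝕜 ((a : 𝕜) • e - y) (y - (b : 𝕜) • e) : 𝕜) =
      (a + b) * re (inner 𝕜 y e : 𝕜) - ‖y‖ ^ 2 - a * b * ‖e‖ ^ 2 := by
  have hre : re (inner 𝕜 e y : 𝕜) = re (inner 𝕜 y e : 𝕜) := inner_re_symm ..
  simp only [inner_sub_left, inner_sub_right, inner_smul_left, inner_smul_right, conj_ofReal,
    map_sub, re_ofReal_mul, inner_self_eq_norm_sq, hre]
  ring

theorem two_sqrt_mul_mul_norm_le_re_inner {e y : H} (he : ‖e‖ = 1) {m M : ℝ} (hmM : 0 ≤ m * M)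
    (h : 0 ≤ re (inner 𝕜 ((M : 𝕜) • e - y) (y - (m : 𝕜) • e) : 𝕜)) :
    2 * √(m * M) * ‖y‖ ≤ (M + m) * re (inner 𝕜 y e : 𝕜) := by
  rw [re_inner_smul_sub_sub_smul_s13, he] at h
  have amgm := two_mul_le_add_sq (√(m * M)) ‖y‖
  rw [Real.sq_sqrt hmM] at amgm
  linarith

theorem two_sqrt_mul_mul_sum_norm_le_re_inner_sum {ι : Type*} (s : Finset ι) {e : H}
    (he : ‖e‖ = 1) {m M : ℝ} (hmM : 0 ≤ m * M) {x : ι → H}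
    (h : ∀ i ∈ s, 0 ≤ re (inner 𝕜 ((M : 𝕜) • e - x i) (x i - (m : 𝕜) • e) : 𝕜)) :
    2 * √(m * M) * ∑ i ∈ s, ‖x i‖ ≤ (M + m) * re (inner 𝕜 (∑ i ∈ s, x i) e : 𝕜) := by
  rw [sum_inner, map_sum, mul_sum, mul_sum]
  exact sum_le_sum fun i hi => two_sqrt_mul_mul_norm_le_re_inner he hmM (h i hi)

end InnerProduct

theorem sq_sqrt_sub_sqrt_div_add_one {m M : ℝ} (hm : 0 < m) (hM : 0 < M) :
    (√M - √m) ^ 2 / (2 * √(m * M)) + 1 = (M + m) / (2 * √(m * M)) := by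
  have hpos : 0 < 2 * √(m * M) := by positivity
  rw [div_add_one hpos.ne', sub_sq, Real.sq_sqrt hm.le, Real.sq_sqrt hM.le,
    Real.sqrt_mul hm.le]
  ring_nf

theorem additive_reverse_triangle_mM {𝕜 H : Type*} [RCLike 𝕜]
    [NormedAddCommGroup H] [InnerProductSpace 𝕜 H] {n : ℕ}
    (e : H) (he : ‖e‖ = 1) (m M : ℝ) (hm : 0 < m) (hmM : m ≤ M)
    (x : Fin n → H)
    (h : ∀ i, 0 ≤ re (inner 𝕜 ((M : 𝕜) • e - x i) (x i - (m : 𝕜) • e) : 𝕜)) :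
    0 ≤ ∑ i, ‖x i‖ - ‖∑ i, x i‖ ∧
      ∑ i, ‖x i‖ - ‖∑ i, x i‖ ≤
        (Real.sqrt M - Real.sqrt m) ^ 2 / (2 * Real.sqrt (m * M)) *
          re (inner 𝕜 (∑ i, x i) e : 𝕜) ∧
      (Real.sqrt M - Real.sqrt m) ^ 2 / (2 * Real.sqrt (m * M)) *
          re (inner 𝕜 (∑ i, x i) e : 𝕜) ≤
        (Real.sqrt M - Real.sqrt m) ^ 2 / (2 * Real.sqrt (m * M)) *
          ‖∑ i, x i‖ := by
  have hM : 0 < M := hm.trans_le hmM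
  have hsum := two_sqrt_mul_mul_sum_norm_le_re_inner_sum univ he (mul_pos hm hM).le
    fun i _ => h i
  have hsum' : ∑ i, ‖x i‖ ≤ (M + m) / (2 * √(m * M)) * re (inner 𝕜 (∑ i, x i) e : 𝕜) := by
    rw [div_mul_eq_mul_div, le_div_iff₀ (by positivity)]
    linarith
  have hcs : re (inner 𝕜 (∑ i, x i) e : 𝕜) ≤ ‖∑ i, x i‖ := by
    simpa [he] using re_inner_le_norm (𝕜 := 𝕜) (∑ i, x i) e
  rw [← sq_sqrt_sub_sqrt_div_add_one hm hM] at hsum'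
  refine ⟨sub_nonneg.2 (norm_sum_le _ _), by linarith, ?_⟩
  gcongr
end

section
/- Let H be an inner product space over the real or complex numbers, let e ∈ H with ‖e‖ = 1, and let Mᵢ ≥ mᵢ > 0 for i ∈ {1, …, n}. If x₁, …, xₙ ∈ H satisfy ‖xᵢ − ((Mᵢ + mᵢ)/2) e‖ ≤ (1/2)(Mᵢ − mᵢ) for each i ∈ {1, …, n}, then 0 ≤ Σᵢ₌₁ⁿ ‖xᵢ‖ − ‖Σᵢ₌₁ⁿ xᵢ‖ ≤ (1/4) Σᵢ₌₁ⁿ (Mᵢ − mᵢ)²/(Mᵢ + mᵢ). Equality in the second inequality holds if and only if Σᵢ₌₁ⁿ ‖xᵢ‖ ≥ (1/4) Σᵢ₌₁ⁿ (Mᵢ − mᵢ)²/(Mᵢ + mᵢ) and Σᵢ₌₁ⁿ xᵢ = (Σᵢ₌₁ⁿ ‖xᵢ‖ − (1/4) Σᵢ₌₁ⁿ (Mᵢ − mᵢ)²/(Mᵢ + mᵢ)) e. -/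
/-!
Write `S = ∑ xᵢ`. Expanding `‖xᵢ - cᵢ e‖² ≤ rᵢ²` with `cᵢ = (Mᵢ + mᵢ)/2`, `rᵢ = (Mᵢ - mᵢ)/2` and
completing the square in `‖xᵢ‖` gives `‖xᵢ‖ - Re⟪e, xᵢ⟫ ≤ rᵢ²/(2cᵢ)`. Summing, and using
`Re⟪e, S⟫ ≤ ‖S‖`, bounds `∑ ‖xᵢ‖ - ‖S‖`. Equality forces `Re⟪e, S⟫ = ‖S‖`, which for a unit vector
`e` means `S = ‖S‖ e`.
-/

open RCLike Finset

section UnitVector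

variable {𝕜 H : Type*} [RCLike 𝕜] [NormedAddCommGroup H] [InnerProductSpace 𝕜 H]
  {e : H}

theorem norm_ofReal_smul_of_norm_eq_one (he : ‖e‖ = 1) {t : ℝ} (ht : 0 ≤ t) :
    ‖(t : 𝕜) • e‖ = t := by
  rw [norm_smul, norm_ofReal, he, mul_one, abs_of_nonneg ht]

theorem norm_sub_ofReal_smul_sq_of_norm_eq_one (he : ‖e‖ = 1) (x : H) (t : ℝ) :
    ‖x - (t : 𝕜) • e‖ ^ 2 = ‖x‖ ^ 2 - 2 * t * re (inner 𝕜 e x) + t ^ 2 := by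
  rw [@norm_sub_sq 𝕜, inner_smul_right, re_ofReal_mul, inner_re_symm, norm_smul, norm_ofReal,
    he, mul_one, sq_abs]
  ring

theorem re_inner_le_norm_of_norm_eq_one (he : ‖e‖ = 1) (y : H) : re (inner 𝕜 e y) ≤ ‖y‖ := by
  simpa [he] using re_inner_le_norm e y

theorem eq_norm_smul_of_re_inner_eq_norm (he : ‖e‖ = 1) {y : H}
    (hy : re (inner 𝕜 e y) = ‖y‖) : y = (‖y‖ : 𝕜) • e := by
  have hsq : ‖y - (‖y‖ : 𝕜) • e‖ ^ 2 = 0 := by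
    rw [norm_sub_ofReal_smul_sq_of_norm_eq_one he, hy]
    ring
  rwa [sq_eq_zero_iff, norm_eq_zero, sub_eq_zero] at hsq

theorem norm_sub_re_inner_le_of_norm_sub_smul_le (he : ‖e‖ = 1) {x : H} {c r : ℝ} (hc : 0 < c)
    (hx : ‖x - (c : 𝕜) • e‖ ≤ r) : ‖x‖ - re (inner 𝕜 e x) ≤ r ^ 2 / (2 * c) := by
  have hsq : ‖x‖ ^ 2 - 2 * c * re (inner 𝕜 e x) + c ^ 2 ≤ r ^ 2 := by
    rw [← norm_sub_ofReal_smul_sq_of_norm_eq_one he]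
    exact pow_le_pow_left₀ (norm_nonneg _) hx 2
  rw [le_div_iff₀ (by positivity)]
  nlinarith [sq_nonneg (‖x‖ - c)]

theorem sub_norm_eq_iff_of_sub_re_inner_le (he : ‖e‖ = 1) {y : H} {a K : ℝ}
    (hle : a - re (inner 𝕜 e y) ≤ K) :
    a - ‖y‖ = K ↔ K ≤ a ∧ y = ((a - K : ℝ) : 𝕜) • e := by
  constructor
  · intro heq
    have hnorm : ‖y‖ = a - K := by linarith
    have hre : re (inner 𝕜 e y) = ‖y‖ :=
      le_antisymm (re_inner_le_norm_of_norm_eq_one he y) (by linarith)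
    refine ⟨by linarith [norm_nonneg y], ?_⟩
    rw [← hnorm]
    exact eq_norm_smul_of_re_inner_eq_norm he hre
  · rintro ⟨hKa, rfl⟩
    rw [norm_ofReal_smul_of_norm_eq_one he (sub_nonneg.2 hKa)]
    ring

end UnitVector

theorem additive_reverse_triangle_mMi {𝕜 H : Type*} [RCLike 𝕜]
    [NormedAddCommGroup H] [InnerProductSpace 𝕜 H] {n : ℕ}
    (e : H) (he : ‖e‖ = 1) (m M : Fin n → ℝ)
    (hm : ∀ i, 0 < m i) (hmM : ∀ i, m i ≤ M i)
    (x : Fin n → H)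
    (h : ∀ i, ‖x i - (((M i + m i) / 2 : ℝ) : 𝕜) • e‖ ≤ (1 / 2) * (M i - m i)) :
    (0 ≤ ∑ i, ‖x i‖ - ‖∑ i, x i‖ ∧
      ∑ i, ‖x i‖ - ‖∑ i, x i‖ ≤ (1 / 4) * ∑ i, (M i - m i) ^ 2 / (M i + m i)) ∧
      (∑ i, ‖x i‖ - ‖∑ i, x i‖ = (1 / 4) * ∑ i, (M i - m i) ^ 2 / (M i + m i) ↔
        (1 / 4) * ∑ i, (M i - m i) ^ 2 / (M i + m i) ≤ ∑ i, ‖x i‖ ∧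
          ∑ i, x i =
            ((∑ i, ‖x i‖ - (1 / 4) * ∑ i, (M i - m i) ^ 2 / (M i + m i) : ℝ) : 𝕜) •
              e) := by
  have hbound : ∑ i, ‖x i‖ - re (inner 𝕜 e (∑ i, x i))
      ≤ (1 / 4) * ∑ i, (M i - m i) ^ 2 / (M i + m i) := by
    rw [inner_sum, map_sum, ← sum_sub_distrib, mul_sum]
    refine sum_le_sum fun i _ => ?_
    have hc : 0 < (M i + m i) / 2 := by linarith [hm i, hmM i]
    calc ‖x i‖ - re (inner 𝕜 e (x i))
        ≤ (1 / 2 * (M i - m i)) ^ 2 / (2 * ((M i + m i) / 2)) :=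
          norm_sub_re_inner_le_of_norm_sub_smul_le he hc (h i)
      _ = 1 / 4 * ((M i - m i) ^ 2 / (M i + m i)) := by ring
  have hupper : ∑ i, ‖x i‖ - ‖∑ i, x i‖ ≤ (1 / 4) * ∑ i, (M i - m i) ^ 2 / (M i + m i) := by
    linarith [re_inner_le_norm_of_norm_eq_one (𝕜 := 𝕜) he (∑ i, x i)]
  exact ⟨⟨sub_nonneg.2 (norm_sum_le _ _), hupper⟩, sub_norm_eq_iff_of_sub_re_inner_le he hbound⟩
end
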